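/- Let κ(Φ_t)(u,r,t;v,ρ) denote the determinant of the 3×3 bordered Hessian with first row (Φ_t, ∂_vΦ_t, ∂_ρΦ_t), second row (∂_vΦ_t, ∂²_{vv}Φ_t, ∂²_{vρ}Φ_t), third row (∂_ρΦ_t, ∂²_{ρv}Φ_t, ∂²_{ρρ}Φ_t). Then whenever Φ(u,r,t;v,ρ) = 0, κ(Φ_t) = b⁴(ρ⁶ − 3(r²+t²)ρ⁴ + 3(r²−t²)²ρ² − (r²−t²)²(r²+t²)). -/

import Mathlib

/-- The defining function Φ(u,r,t;v,ρ) = (u−v)² − (b/2)²(4r²ρ² − (r²+ρ²−t²)²). -/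
noncomputable def Phi (b u r t v ρ : ℝ) : ℝ :=
  (u - v) ^ 2 - (b / 2) ^ 2 * (4 * r ^ 2 * ρ ^ 2 - (r ^ 2 + ρ ^ 2 - t ^ 2) ^ 2)

/-- ∂_u Φ -/
noncomputable def Pu (b u r t v ρ : ℝ) : ℝ := deriv (fun u' => Phi b u' r t v ρ) u
/-- ∂_r Φ -/
noncomputable def Pr (b u r t v ρ : ℝ) : ℝ := deriv (fun r' => Phi b u r' t v ρ) r
/-- ∂_t Φ -/
noncomputable def Pt (b u r t v ρ : ℝ) : ℝ := deriv (fun t' => Phi b u r t' v ρ) t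
/-- ∂_v Φ -/
noncomputable def Pv (b u r t v ρ : ℝ) : ℝ := deriv (fun v' => Phi b u r t v' ρ) v
/-- ∂_ρ Φ -/
noncomputable def Pp (b u r t v ρ : ℝ) : ℝ := deriv (fun ρ' => Phi b u r t v ρ') ρ
/-- ∂²_{uv} Φ -/
noncomputable def Puv (b u r t v ρ : ℝ) : ℝ := deriv (fun u' => Pv b u' r t v ρ) u
/-- ∂²_{uρ} Φ -/
noncomputable def Pup (b u r t v ρ : ℝ) : ℝ := deriv (fun u' => Pp b u' r t v ρ) u
/-- ∂²_{rv} Φ -/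
noncomputable def Prv (b u r t v ρ : ℝ) : ℝ := deriv (fun r' => Pv b u r' t v ρ) r
/-- ∂²_{rρ} Φ -/
noncomputable def Prp (b u r t v ρ : ℝ) : ℝ := deriv (fun r' => Pp b u r' t v ρ) r
/-- ∂²_{tv} Φ -/
noncomputable def Ptv (b u r t v ρ : ℝ) : ℝ := deriv (fun t' => Pv b u r t' v ρ) t
/-- ∂²_{tρ} Φ -/
noncomputable def Ptp (b u r t v ρ : ℝ) : ℝ := deriv (fun t' => Pp b u r t' v ρ) t
/-- ∂²_{vv} Φ -/
noncomputable def Pvv (b u r t v ρ : ℝ) : ℝ := deriv (fun v' => Pv b u r t v' ρ) v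
/-- ∂²_{vρ} Φ -/
noncomputable def Pvp (b u r t v ρ : ℝ) : ℝ := deriv (fun v' => Pp b u r t v' ρ) v
/-- ∂²_{ρv} Φ -/
noncomputable def Ppv (b u r t v ρ : ℝ) : ℝ := deriv (fun ρ' => Pv b u r t v ρ') ρ
/-- ∂²_{ρρ} Φ -/
noncomputable def Ppp (b u r t v ρ : ℝ) : ℝ := deriv (fun ρ' => Pp b u r t v ρ') ρ

theorem hasDerivAt_Phi_v (b u r t v ρ : ℝ) :
    HasDerivAt (fun v' => Phi b u r t v' ρ) (-2 * (u - v)) v :=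
  ((((hasDerivAt_id' v).const_sub u).pow 2).sub_const _).congr_deriv (by ring)

theorem hasDerivAt_Phi_ρ (b u r t v ρ : ℝ) :
    HasDerivAt (fun ρ' => Phi b u r t v ρ') (-b ^ 2 * ρ * (t ^ 2 + r ^ 2 - ρ ^ 2)) ρ :=
  (((((hasDerivAt_pow 2 ρ).const_mul (4 * r ^ 2)).sub
    ((((hasDerivAt_pow 2 ρ).const_add (r ^ 2)).sub_const (t ^ 2)).pow 2)).const_mul
    ((b / 2) ^ 2)).const_sub ((u - v) ^ 2)).congr_deriv (by ring)

theorem Pv_eq (b u r t v ρ : ℝ) : Pv b u r t v ρ = -2 * (u - v) :=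
  (hasDerivAt_Phi_v b u r t v ρ).deriv

theorem Pp_eq (b u r t v ρ : ℝ) : Pp b u r t v ρ = -b ^ 2 * ρ * (t ^ 2 + r ^ 2 - ρ ^ 2) :=
  (hasDerivAt_Phi_ρ b u r t v ρ).deriv

theorem Pvv_eq (b u r t v ρ : ℝ) : Pvv b u r t v ρ = 2 := by
  simp only [Pvv, Pv_eq]
  exact (((hasDerivAt_id' v).const_sub u).const_mul (-2)).deriv.trans (by ring)

theorem Pvp_eq (b u r t v ρ : ℝ) : Pvp b u r t v ρ = 0 := by
  simp only [Pvp, Pp_eq, deriv_const]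

theorem Ppv_eq (b u r t v ρ : ℝ) : Ppv b u r t v ρ = 0 := by
  simp only [Ppv, Pv_eq, deriv_const]

theorem Ppp_eq (b u r t v ρ : ℝ) : Ppp b u r t v ρ = -b ^ 2 * (t ^ 2 + r ^ 2 - 3 * ρ ^ 2) := by
  simp only [Ppp, Pp_eq]
  exact (((hasDerivAt_id' ρ).const_mul (-b ^ 2)).mul
    ((hasDerivAt_pow 2 ρ).const_sub (t ^ 2 + r ^ 2))).deriv.trans (by ring)

theorem Matrix.det_bordered_diagonal_fin_three {R : Type*} [CommRing R] (F a c A C : R) :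
    !![F, a, c; a, A, 0; c, 0, C].det = F * A * C - a ^ 2 * C - c ^ 2 * A := by
  rw [Matrix.det_fin_three]
  simp only [of_apply, cons_val', cons_val_zero, cons_val_one, cons_val, cons_val_fin_one]
  ring

/-- On the zero set of Φ, the bordered-Hessian curvature determinant κ(Φ_t)
equals b⁴(ρ⁶ − 3(r²+t²)ρ⁴ + 3(r²−t²)²ρ² − (r²−t²)²(r²+t²)). -/
theorem statement8 (b u r t v ρ : ℝ) (hΦ : Phi b u r t v ρ = 0) :
    Matrix.det !![Phi b u r t v ρ, Pv b u r t v ρ, Pp b u r t v ρ;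
                  Pv b u r t v ρ, Pvv b u r t v ρ, Pvp b u r t v ρ;
                  Pp b u r t v ρ, Ppv b u r t v ρ, Ppp b u r t v ρ]
      = b ^ 4 * (ρ ^ 6 - 3 * (r ^ 2 + t ^ 2) * ρ ^ 4 + 3 * (r ^ 2 - t ^ 2) ^ 2 * ρ ^ 2
          - (r ^ 2 - t ^ 2) ^ 2 * (r ^ 2 + t ^ 2)) := by
  rw [Pv_eq, Pp_eq, Pvv_eq, Pvp_eq, Ppv_eq, Ppp_eq, Matrix.det_bordered_diagonal_fin_three]
  unfold Phi at hΦ ⊢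
  -- on Φ = 0 the term (∂_vΦ)² ∂²_{ρρ}Φ = 4(u−v)² ∂²_{ρρ}Φ becomes a polynomial in r, t, ρ
  linear_combination (2 * b ^ 2 * (t ^ 2 + r ^ 2 - 3 * ρ ^ 2)) * hΦ
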